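/- Let θ ∈ (0, π/2) and w ∈ ℝ with cos w ≠ 0 and sin w ≠ 0, and define γ : (0, ∞) → ℝ³ by γ(s) = (s·sin θ·cos w·cos(μ·ln s), s·sin θ·cos w·sin(μ·ln s), s·sin θ·sin w), where μ = cos θ/(sin θ·cos w). Then the torsion of γ satisfies τ(s) = det(γ'(s), γ''(s), γ'''(s))/‖γ''(s)‖² = cos θ·tan w/s for all s > 0, and the ratio τ(s)/κ(s) of torsion to curvature κ(s) = ‖γ''(s)‖ is constant in s (the Lancret relation holds), while neither κ nor τ is constant. -/

import Mathlib

open Real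
open scoped RealInnerProductSpace

/-- A point/vector of Euclidean 3-space. -/
noncomputable def v3 (x y z : ℝ) : EuclideanSpace ℝ (Fin 3) := !₂[x, y, z]

/-- Determinant of the 3×3 matrix with rows u, v, w. -/
noncomputable def det3 (u v w : EuclideanSpace ℝ (Fin 3)) : ℝ :=
  Matrix.det !![u 0, u 1, u 2; v 0, v 1, v 2; w 0, w 1, w 2]

/-!
Writing `c = sin θ cos w`, `d = sin θ sin w` and `φ = μ log s`, the curve is
`s (c cos φ, c sin φ, d)`. Since `dφ/ds = μ / s`, each derivative of the horizontal part is again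
a rotation by `φ` of a fixed planar vector, scaled by one more power of `1/s`; the vertical part
is linear. Hence `‖γ''‖² = c²μ²(1+μ²)/s²` and `det(γ', γ'', γ''') = d c² μ³ (1+μ²)/s³`, so
`κ = K/s` and `τ = dμ/s = cos θ tan w / s` with constants `K > 0` and `dμ ≠ 0`.
-/

lemma hasDerivAt_v3 {f₁ f₂ f₃ : ℝ → ℝ} {f₁' f₂' f₃' s : ℝ}
    (h₁ : HasDerivAt f₁ f₁' s) (h₂ : HasDerivAt f₂ f₂' s) (h₃ : HasDerivAt f₃ f₃' s) :
    HasDerivAt (fun t => v3 (f₁ t) (f₂ t) (f₃ t)) (v3 f₁' f₂' f₃') s := by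
  have h : HasDerivAt (fun t => (![f₁ t, f₂ t, f₃ t] : Fin 3 → ℝ)) ![f₁', f₂', f₃'] s := by
    rw [hasDerivAt_pi]; intro i; fin_cases i <;> simpa
  exact ((PiLp.continuousLinearEquiv 2 ℝ (fun _ : Fin 3 => ℝ)).symm.hasFDerivAt.comp_hasDerivAt s h :)

lemma det3_v3 (a b c d e f g h i : ℝ) :
    det3 (v3 a b c) (v3 d e f) (v3 g h i)
      = a * (e * i - f * h) - b * (d * i - f * g) + c * (d * h - e * g) := by
  simp only [det3, v3, Matrix.det_fin_three, Matrix.of_apply, Matrix.cons_val', Matrix.cons_val_zero,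
    Matrix.cons_val_one, Matrix.cons_val, Matrix.cons_val_fin_one]
  ring

lemma norm_v3_sq (a b c : ℝ) : ‖v3 a b c‖ ^ 2 = a ^ 2 + b ^ 2 + c ^ 2 := by
  rw [EuclideanSpace.norm_eq, Real.sq_sqrt (by positivity)]
  simp [v3, Fin.sum_univ_three, sq_abs]

lemma hasDerivAt_deriv_of_forall_mem_open {F : Type*} [NormedAddCommGroup F] [NormedSpace ℝ F]
    {U : Set ℝ} (hU : IsOpen U) {f f' f'' : ℝ → F}
    (hf : ∀ t ∈ U, HasDerivAt f (f' t) t) (hf' : ∀ t ∈ U, HasDerivAt f' (f'' t) t) :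
    ∀ t ∈ U, HasDerivAt (deriv f) (f'' t) t := fun t ht =>
  (hf' t ht).congr_of_eventuallyEq <|
    Filter.eventuallyEq_of_mem (hU.mem_nhds ht) fun u hu => (hf u hu).deriv

section ConicalHelix

variable (c d μ : ℝ)

noncomputable def conicalHelix (s : ℝ) : EuclideanSpace ℝ (Fin 3) :=
  v3 (s * c * cos (μ * log s)) (s * c * sin (μ * log s)) (s * d)

noncomputable def conicalHelixVelocity (s : ℝ) : EuclideanSpace ℝ (Fin 3) :=
  v3 (c * (cos (μ * log s) - μ * sin (μ * log s)))
    (c * (sin (μ * log s) + μ * cos (μ * log s))) d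

noncomputable def conicalHelixAcceleration (s : ℝ) : EuclideanSpace ℝ (Fin 3) :=
  v3 (c * μ * (-sin (μ * log s) - μ * cos (μ * log s)) / s)
    (c * μ * (cos (μ * log s) - μ * sin (μ * log s)) / s) 0

noncomputable def conicalHelixJerk (s : ℝ) : EuclideanSpace ℝ (Fin 3) :=
  v3 (c * μ * (1 + μ ^ 2) * sin (μ * log s) / s ^ 2)
    (-(c * μ * (1 + μ ^ 2) * cos (μ * log s)) / s ^ 2) 0

variable {c d μ}

lemma hasDerivAt_mul_log {s : ℝ} (hs : 0 < s) : HasDerivAt (fun t => μ * log t) (μ / s) s := by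
  simpa [div_eq_mul_inv] using (hasDerivAt_log hs.ne').const_mul μ

lemma hasDerivAt_conicalHelix {s : ℝ} (hs : 0 < s) :
    HasDerivAt (conicalHelix c d μ) (conicalHelixVelocity c d μ s) s := by
  have hφ := hasDerivAt_mul_log (μ := μ) hs
  have hsc := (hasDerivAt_id s).mul_const c
  refine (hasDerivAt_v3 (hsc.mul hφ.cos) (hsc.mul hφ.sin)
    ((hasDerivAt_id s).mul_const d)).congr_deriv ?_
  simp only [conicalHelixVelocity, id]
  congr 1 <;> field_simp
  ring

lemma hasDerivAt_conicalHelixVelocity {s : ℝ} (hs : 0 < s) :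
    HasDerivAt (conicalHelixVelocity c d μ) (conicalHelixAcceleration c μ s) s := by
  have hφ := hasDerivAt_mul_log (μ := μ) hs
  refine (hasDerivAt_v3 ((hφ.cos.sub (hφ.sin.const_mul μ)).const_mul c)
    ((hφ.sin.add (hφ.cos.const_mul μ)).const_mul c) (hasDerivAt_const s d)).congr_deriv ?_
  simp only [conicalHelixAcceleration]
  congr 1 <;> field_simp
  ring

lemma hasDerivAt_conicalHelixAcceleration {s : ℝ} (hs : 0 < s) :
    HasDerivAt (conicalHelixAcceleration c μ) (conicalHelixJerk c μ s) s := by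
  have hφ := hasDerivAt_mul_log (μ := μ) hs
  refine (hasDerivAt_v3
    (((hφ.sin.neg.sub (hφ.cos.const_mul μ)).const_mul (c * μ)).div (hasDerivAt_id s) hs.ne')
    (((hφ.cos.sub (hφ.sin.const_mul μ)).const_mul (c * μ)).div (hasDerivAt_id s) hs.ne')
    (hasDerivAt_const s 0)).congr_deriv ?_
  simp only [conicalHelixJerk, id, Pi.sub_apply, Pi.neg_apply]
  congr 1 <;> field_simp <;> ring

lemma norm_conicalHelixAcceleration_sq (s : ℝ) :
    ‖conicalHelixAcceleration c μ s‖ ^ 2 = (c * μ) ^ 2 * (1 + μ ^ 2) / s ^ 2 := by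
  rw [conicalHelixAcceleration, norm_v3_sq]
  linear_combination (c * μ) ^ 2 * (1 + μ ^ 2) / s ^ 2 * sin_sq_add_cos_sq (μ * log s)

lemma norm_conicalHelixAcceleration {s : ℝ} (hs : 0 < s) :
    ‖conicalHelixAcceleration c μ s‖ = √((c * μ) ^ 2 * (1 + μ ^ 2)) / s := by
  rw [← sqrt_sq (norm_nonneg _), norm_conicalHelixAcceleration_sq, sqrt_div' _ (by positivity),
    sqrt_sq hs.le]

lemma det3_conicalHelix_derivatives (s : ℝ) :
    det3 (conicalHelixVelocity c d μ s) (conicalHelixAcceleration c μ s) (conicalHelixJerk c μ s)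
      = d * c ^ 2 * μ ^ 3 * (1 + μ ^ 2) / s ^ 3 := by
  rw [conicalHelixVelocity, conicalHelixAcceleration, conicalHelixJerk, det3_v3]
  linear_combination d * c ^ 2 * μ ^ 3 * (1 + μ ^ 2) / s ^ 3 * sin_sq_add_cos_sq (μ * log s)

lemma torsion_conicalHelix (hc : c ≠ 0) (hμ : μ ≠ 0) {s : ℝ} (hs : 0 < s) :
    det3 (conicalHelixVelocity c d μ s) (conicalHelixAcceleration c μ s) (conicalHelixJerk c μ s)
      / ‖conicalHelixAcceleration c μ s‖ ^ 2 = d * μ / s := by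
  rw [det3_conicalHelix_derivatives, norm_conicalHelixAcceleration_sq]
  field_simp

end ConicalHelix

lemma not_exists_const_of_eq_div {f : ℝ → ℝ} {a : ℝ} (ha : a ≠ 0)
    (hf : ∀ s, 0 < s → f s = a / s) : ¬ ∃ b, ∀ s, 0 < s → f s = b := by
  rintro ⟨b, hb⟩
  have h₁ := (hf 1 one_pos).symm.trans (hb 1 one_pos)
  have h₂ := (hf 2 two_pos).symm.trans (hb 2 two_pos)
  exact ha (by linarith)

/-- For the conical curve with ω constant (= w), the torsion is
cos θ·tan w/s, the ratio τ/κ is constant (Lancret relation), but neither the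
curvature nor the torsion is constant. -/
theorem stmt_5 (θ w : ℝ) (hθ : θ ∈ Set.Ioo 0 (Real.pi / 2))
    (hw : Real.cos w ≠ 0) (hw2 : Real.sin w ≠ 0)
    (μ : ℝ) (hμ : μ = Real.cos θ / (Real.sin θ * Real.cos w))
    (γ : ℝ → EuclideanSpace ℝ (Fin 3))
    (hγ : γ = fun s => v3 (s * Real.sin θ * Real.cos w * Real.cos (μ * Real.log s))
        (s * Real.sin θ * Real.cos w * Real.sin (μ * Real.log s))
        (s * Real.sin θ * Real.sin w))
    (κ τ : ℝ → ℝ)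
    (hκ : ∀ s, κ s = ‖deriv (deriv γ) s‖)
    (hτ : ∀ s, τ s = det3 (deriv γ s) (deriv (deriv γ) s) (deriv (deriv (deriv γ)) s)
        / ‖deriv (deriv γ) s‖ ^ 2) :
    (∀ s : ℝ, 0 < s → τ s = Real.cos θ * Real.tan w / s) ∧
    (∃ a : ℝ, ∀ s : ℝ, 0 < s → τ s / κ s = a) ∧
    (¬ ∃ a : ℝ, ∀ s : ℝ, 0 < s → κ s = a) ∧
    (¬ ∃ a : ℝ, ∀ s : ℝ, 0 < s → τ s = a) := by
  set c := sin θ * cos w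
  set d := sin θ * sin w
  have hsθ : 0 < sin θ := sin_pos_of_pos_of_lt_pi hθ.1 (by linarith [hθ.2, pi_pos])
  have hcθ : 0 < cos θ := cos_pos_of_mem_Ioo ⟨by linarith [hθ.1, pi_pos], hθ.2⟩
  have hc : c ≠ 0 := mul_ne_zero hsθ.ne' hw
  have hμ0 : μ ≠ 0 := hμ ▸ div_ne_zero hcθ.ne' hc
  have hdμ : d * μ = cos θ * tan w := by
    rw [hμ, tan_eq_sin_div_cos]; field_simp; ring
  have hγ' : γ = conicalHelix c d μ := by rw [hγ]; funext s; congr 1 <;> ring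
  have h₁ := fun s (hs : s ∈ Set.Ioi (0 : ℝ)) => hγ' ▸ hasDerivAt_conicalHelix (d := d) hs
  have h₂ := hasDerivAt_deriv_of_forall_mem_open isOpen_Ioi h₁
    fun s hs => hasDerivAt_conicalHelixVelocity hs
  have h₃ := hasDerivAt_deriv_of_forall_mem_open isOpen_Ioi h₂
    fun s hs => hasDerivAt_conicalHelixAcceleration hs
  have hτs : ∀ s, 0 < s → τ s = cos θ * tan w / s := fun s hs => by
    rw [hτ, (h₁ s hs).deriv, (h₂ s hs).deriv, (h₃ s hs).deriv, torsion_conicalHelix hc hμ0 hs, hdμ]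
  have hκs : ∀ s, 0 < s → κ s = √((c * μ) ^ 2 * (1 + μ ^ 2)) / s := fun s hs => by
    rw [hκ, (h₂ s hs).deriv, norm_conicalHelixAcceleration hs]
  have hK : 0 < √((c * μ) ^ 2 * (1 + μ ^ 2)) := sqrt_pos.2 (by positivity)
  have hT : cos θ * tan w ≠ 0 := hdμ ▸ mul_ne_zero (mul_ne_zero hsθ.ne' hw2) hμ0
  refine ⟨hτs, ⟨cos θ * tan w / √((c * μ) ^ 2 * (1 + μ ^ 2)), fun s hs => ?_⟩,
    not_exists_const_of_eq_div hK.ne' hκs, not_exists_const_of_eq_div hT hτs⟩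
  rw [hτs s hs, hκs s hs]
  field_simp
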